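/- For a quasi-uniform point set in a ball, the fill distance decays like K^{−1/d}: let d ∈ ℕ, d ≥ 1, x₀ ∈ ℝ^d, R > 0, let O ⊆ closedBall(x₀, R) be a nonempty set, let K ≥ 2 and let X = {x₁, …, x_K} ⊆ O consist of K pairwise distinct points. Set q_X := (1/2) min_{i ≠ j} |x_i − x_j| and h_{X,O} := sup_{x ∈ O} min_{1 ≤ j ≤ K} |x − x_j|, and assume X is quasi-uniform with constant c_qu > 0, i.e. q_X ≤ h_{X,O} ≤ c_qu q_X. Then h_{X,O} ≤ 2 R c_qu K^{−1/d}. -/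

import Mathlib

open Metric MeasureTheory Finset ENNReal

/-- For a quasi-uniform point set in a ball, the fill distance decays
like `K ^ (-1/d)` (Lemma 6.2 of the paper). -/
theorem fill_distance_bound
    (d : ℕ) (hd : 1 ≤ d) (x₀ : EuclideanSpace ℝ (Fin d)) (R : ℝ) (hR : 0 < R)
    (O : Set (EuclideanSpace ℝ (Fin d))) (hOne : O.Nonempty)
    (hOsub : O ⊆ Metric.closedBall x₀ R)
    (K : ℕ) (hK : 2 ≤ K)
    (x : Fin K → EuclideanSpace ℝ (Fin d))
    (hxO : ∀ i, x i ∈ O) (hinj : Function.Injective x)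
    (c_qu : ℝ) (hc : 0 < c_qu) (qX hX : ℝ)
    (hqX : qX = (1 / 2) * ⨅ p : {p : Fin K × Fin K // p.1 ≠ p.2},
      dist (x p.1.1) (x p.1.2))
    (hhX : hX = ⨆ y ∈ O, ⨅ j, dist y (x j))
    (hqu₁ : qX ≤ hX) (hqu₂ : hX ≤ c_qu * qX) :
    hX ≤ 2 * R * c_qu * (K : ℝ) ^ (-(1 : ℝ) / d) := by
  haveI : Nonempty (Fin d) := ⟨⟨0, hd⟩⟩
  haveI : Nonempty {p : Fin K × Fin K // p.1 ≠ p.2} := by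
    refine ⟨⟨(⟨0, by omega⟩, ⟨1, by omega⟩), ?_⟩⟩
    simp [Fin.ext_iff]
  have hd' : (0:ℝ) < (d:ℝ) := by exact_mod_cast hd
  have hK' : (0:ℝ) < (K:ℝ) := by positivity
  -- the infimum is attained, and all pairwise distances are at least `2 * qX`
  have hbdd : BddBelow (Set.range fun p : {p : Fin K × Fin K // p.1 ≠ p.2} =>
      dist (x p.1.1) (x p.1.2)) := (Set.finite_range _).bddBelow
  have hdist : ∀ i j : Fin K, i ≠ j → 2 * qX ≤ dist (x i) (x j) := by
    intro i j hij
    have := ciInf_le hbdd (⟨(i, j), hij⟩ : {p : Fin K × Fin K // p.1 ≠ p.2})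
    rw [hqX]; linarith
  obtain ⟨p₀, hp₀⟩ := exists_eq_ciInf_of_finite
    (f := fun p : {p : Fin K × Fin K // p.1 ≠ p.2} => dist (x p.1.1) (x p.1.2))
  have hq_pos : 0 < qX := by
    rw [hqX, ← hp₀]
    have : x p₀.1.1 ≠ x p₀.1.2 := fun h => p₀.2 (hinj h)
    have := dist_pos.2 this
    linarith
  -- qX ≤ R since the points lie in a ball of radius R
  have hqR : qX ≤ R := by
    have h1 := hOsub (hxO p₀.1.1)
    have h2 := hOsub (hxO p₀.1.2)
    simp only [mem_closedBall] at h1 h2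
    have : dist (x p₀.1.1) (x p₀.1.2) ≤ 2 * R := by
      calc dist (x p₀.1.1) (x p₀.1.2) ≤ dist (x p₀.1.1) x₀ + dist x₀ (x p₀.1.2) :=
            dist_triangle _ _ _
        _ ≤ 2 * R := by rw [dist_comm x₀] at *; linarith
    rw [hqX, ← hp₀]; linarith
  -- the balls of radius qX around the points are pairwise disjoint
  have hdisj : (↑(Finset.univ : Finset (Fin K)) : Set (Fin K)).PairwiseDisjoint
      fun i => ball (x i) qX := by
    intro i _ j _ hij
    refine Set.disjoint_left.2 fun y hyi hyj => ?_
    have := hdist i j hij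
    have h1 : dist y (x i) < qX := mem_ball.1 hyi
    have h2 : dist y (x j) < qX := mem_ball.1 hyj
    have := dist_triangle (x i) y (x j)
    rw [dist_comm (x i) y] at this
    linarith
  -- and contained in the ball of radius 2R around x₀
  have hsub : (⋃ i ∈ (Finset.univ : Finset (Fin K)), ball (x i) qX) ⊆
      closedBall x₀ (2 * R) := by
    intro y hy
    simp only [Set.mem_iUnion] at hy
    obtain ⟨i, -, hi⟩ := hy
    have h1 : dist y (x i) < qX := mem_ball.1 hi
    have h2 : dist (x i) x₀ ≤ R := mem_closedBall.1 (hOsub (hxO i))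
    have := dist_triangle y (x i) x₀
    simp only [mem_closedBall]
    linarith
  -- volume comparison
  have hvol : (K : ℝ≥0∞) * (ENNReal.ofReal (qX ^ d) * volume (ball (0 : EuclideanSpace ℝ (Fin d)) 1))
      ≤ ENNReal.ofReal ((2 * R) ^ d) * volume (ball (0 : EuclideanSpace ℝ (Fin d)) 1) := by
    have h1 : volume (⋃ i ∈ (Finset.univ : Finset (Fin K)), ball (x i) qX)
        = ∑ i : Fin K, volume (ball (x i) qX) :=
      measure_biUnion_finset hdisj fun i _ => measurableSet_ball
    have h2 : ∀ i : Fin K, volume (ball (x i) qX)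
        = ENNReal.ofReal (qX ^ d) * volume (ball (0 : EuclideanSpace ℝ (Fin d)) 1) := by
      intro i
      rw [Measure.addHaar_ball volume (x i) hq_pos.le, finrank_euclideanSpace_fin]
    have h3 : volume (closedBall x₀ (2 * R))
        = ENNReal.ofReal ((2 * R) ^ d) * volume (ball (0 : EuclideanSpace ℝ (Fin d)) 1) := by
      rw [Measure.addHaar_closedBall volume x₀ (by linarith), finrank_euclideanSpace_fin]
    calc (K : ℝ≥0∞) * (ENNReal.ofReal (qX ^ d) * volume (ball (0 : EuclideanSpace ℝ (Fin d)) 1))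
        = ∑ i : Fin K, volume (ball (x i) qX) := by
          simp [h2, Finset.sum_const, nsmul_eq_mul]
      _ = volume (⋃ i ∈ (Finset.univ : Finset (Fin K)), ball (x i) qX) := h1.symm
      _ ≤ volume (closedBall x₀ (2 * R)) := measure_mono hsub
      _ = _ := h3
  -- cancel the (positive, finite) volume of the unit ball
  have hVpos : 0 < volume (ball (0 : EuclideanSpace ℝ (Fin d)) 1) :=
    measure_ball_pos _ _ one_pos
  have hVfin : volume (ball (0 : EuclideanSpace ℝ (Fin d)) 1) ≠ ⊤ :=
    measure_ball_lt_top.ne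
  have hkey : (K : ℝ) * qX ^ d ≤ (2 * R) ^ d := by
    have h4 : (K : ℝ≥0∞) * ENNReal.ofReal (qX ^ d) ≤ ENNReal.ofReal ((2 * R) ^ d) := by
      rw [← mul_assoc] at hvol
      exact (ENNReal.mul_le_mul_iff_left hVpos.ne' hVfin).1 hvol
    have h5 : ENNReal.ofReal ((K : ℝ) * qX ^ d) ≤ ENNReal.ofReal ((2 * R) ^ d) := by
      rw [ENNReal.ofReal_mul (by positivity), ENNReal.ofReal_natCast]
      exact h4
    have := (ENNReal.ofReal_le_ofReal_iff (by positivity)).1 h5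
    exact this
  -- extract qX ≤ 2R * K^(-1/d)
  have hq_bound : qX ≤ 2 * R * (K : ℝ) ^ (-(1 : ℝ) / d) := by
    have hKpow : (0:ℝ) < (K : ℝ) ^ ((1 : ℝ) / d) := Real.rpow_pos_of_pos hK' _
    rw [neg_div, Real.rpow_neg hK'.le, ← div_eq_mul_inv, le_div_iff₀ hKpow]
    have hpow : (qX * (K : ℝ) ^ ((1 : ℝ) / d)) ^ d ≤ (2 * R) ^ d := by
      rw [mul_pow]
      have : ((K : ℝ) ^ ((1 : ℝ) / d)) ^ d = (K : ℝ) := by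
        rw [← Real.rpow_natCast ((K : ℝ) ^ ((1 : ℝ) / d)) d, ← Real.rpow_mul hK'.le,
          one_div, inv_mul_cancel₀ hd'.ne', Real.rpow_one]
      rw [this, mul_comm]
      exact hkey
    exact (pow_le_pow_iff_left₀ (by positivity) (by positivity) (by omega)).1 hpow
  -- conclude
  calc hX ≤ c_qu * qX := hqu₂
    _ ≤ c_qu * (2 * R * (K : ℝ) ^ (-(1 : ℝ) / d)) := by
        exact mul_le_mul_of_nonneg_left hq_bound hc.le
    _ = 2 * R * c_qu * (K : ℝ) ^ (-(1 : ℝ) / d) := by ring
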